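/- Let (V, ⟨,⟩) be a 2n-dimensional complex symplectic vector space and let M : Cⁿ → V be a linear map of rank ≥ n-1 whose image is isotropic. Then M_lag (the variety of maps with isotropic image) is smooth at M, i.e., the n(n-1)/2 defining equations ⟨m_k, m_l⟩ = 0 have linearly independent differentials at M. -/

import Mathlib

/-!
Suppose `∑_{k<l} c_{kl} D_{kl} = 0` and let `A` be the antisymmetric matrix with strict upper
triangle `c`. Since `B` is alternating, `D_{kl} H = B (H e_k) (M e_l) - B (H e_l) (M e_k)`, so
evaluating the relation on the rank-one maps `x ↦ x_j • w` gives `B (M (A j)) w = 0` for all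
`w`, i.e. every row of `A` lies in `ker M`, which has dimension at most one. If `c_{kl} ≠ 0`,
rows `k` and `l` of `A` are independent, because `A` vanishes on the diagonal while
`A k l = c_{kl} = -A l k`.
-/

open Matrix Module LinearMap

theorem linearIndependent_pair_of_apply_eq_zero {R ι : Type*} [Ring R] [NoZeroDivisors R]
    {u v : ι → R} {k l : ι} (hu : u k = 0) (hv : v l = 0) (hul : u l ≠ 0) (hvk : v k ≠ 0) :
    LinearIndependent R ![u, v] := by
  refine LinearIndependent.pair_iff.mpr fun s t hst => ?_
  have hk := congrFun hst k
  have hl := congrFun hst l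
  simp only [Pi.add_apply, Pi.smul_apply, smul_eq_mul, Pi.zero_apply, hu, hv, mul_zero,
    zero_add, add_zero] at hk hl
  exact ⟨(mul_eq_zero.mp hl).resolve_right hul, (mul_eq_zero.mp hk).resolve_right hvk⟩

section SkewMatrix

variable {K ι : Type*} [CommRing K] [LinearOrder ι]

def skewSingle (k l : ι) : Matrix ι ι K :=
  vecMulVec (Pi.single k 1) (Pi.single l 1) - vecMulVec (Pi.single l 1) (Pi.single k 1)

theorem skewSingle_apply (k l i j : ι) :
    skewSingle k l i j = (Pi.single k 1 : ι → K) i * (Pi.single l 1 : ι → K) j -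
      (Pi.single l 1 : ι → K) i * (Pi.single k 1 : ι → K) j := by
  simp [skewSingle, vecMulVec_apply]

theorem skewSingle_row (k l j : ι) :
    skewSingle k l j = (Pi.single k 1 : ι → K) j • (Pi.single l 1 : ι → K) -
      (Pi.single l 1 : ι → K) j • (Pi.single k 1 : ι → K) := by
  ext i
  simp [skewSingle_apply]

variable [Fintype ι]

def skewOfUpper (c : {q : ι × ι // q.1 < q.2} → K) : Matrix ι ι K :=
  ∑ q, c q • skewSingle q.1.1 q.1.2

variable (c : {q : ι × ι // q.1 < q.2} → K)

theorem skewOfUpper_apply (i j : ι) :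
    skewOfUpper c i j = ∑ q, c q * skewSingle q.1.1 q.1.2 i j := by
  simp [skewOfUpper, Matrix.sum_apply]

theorem skewOfUpper_row (j : ι) :
    skewOfUpper c j = ∑ q, c q • skewSingle q.1.1 q.1.2 j := by
  ext i
  simp [skewOfUpper_apply]

theorem skewOfUpper_apply_self (i : ι) : skewOfUpper c i i = 0 := by
  simp [skewOfUpper_apply, skewSingle_apply, mul_comm]

theorem skewOfUpper_apply_swap (i j : ι) : skewOfUpper c j i = -skewOfUpper c i j := by
  simp only [skewOfUpper_apply, skewSingle_apply, ← Finset.sum_neg_distrib]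
  exact Finset.sum_congr rfl fun q _ => by ring

theorem skewOfUpper_apply_of_lt {k l : ι} (hkl : k < l) :
    skewOfUpper c k l = c ⟨(k, l), hkl⟩ := by
  rw [skewOfUpper_apply, Finset.sum_eq_single ⟨(k, l), hkl⟩]
  · simp [skewSingle_apply, hkl.ne]
  · rintro ⟨⟨a, b⟩, hab⟩ _ hne
    have hkl' : ¬(l = b ∧ k = a) := fun ⟨hlb, hka⟩ => hne (by subst hlb hka; rfl)
    have hlk' : ¬(l = a ∧ k = b) := fun ⟨hla, hkb⟩ => lt_asymm hkl (hla ▸ hkb ▸ hab)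
    simp [skewSingle_apply, Pi.single_apply, ← ite_and, hkl', hlk']
  · simp

end SkewMatrix

theorem skewOfUpper_eq_zero_of_row_mem {F ι : Type*} [Field F] [LinearOrder ι] [Fintype ι]
    {c : {q : ι × ι // q.1 < q.2} → F} {W : Submodule F (ι → F)} (hW : finrank F W ≤ 1)
    (hrow : ∀ j, skewOfUpper c j ∈ W) : c = 0 := by
  funext ⟨⟨k, l⟩, hkl⟩
  by_contra hne
  have hli : LinearIndependent F ![skewOfUpper c k, skewOfUpper c l] :=
    linearIndependent_pair_of_apply_eq_zero (skewOfUpper_apply_self c k)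
      (skewOfUpper_apply_self c l) (by rwa [skewOfUpper_apply_of_lt c hkl])
      (by rwa [skewOfUpper_apply_swap, skewOfUpper_apply_of_lt c hkl, neg_ne_zero])
  have hspan : Submodule.span F (Set.range ![skewOfUpper c k, skewOfUpper c l]) ≤ W := by
    rw [Submodule.span_le, Set.range_subset_iff]
    exact Fin.forall_fin_two.mpr ⟨hrow k, hrow l⟩
  have hle := Submodule.finrank_mono hspan
  rw [finrank_span_eq_card hli, Fintype.card_fin] at hle
  omega

section IsotropyDifferential

variable {K V ι : Type*} [CommRing K] [AddCommGroup V] [Module K V] [LinearOrder ι]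

def isotropyDifferential (B : LinearMap.BilinForm K V) (M : (ι → K) →ₗ[K] V) (k l : ι) :
    ((ι → K) →ₗ[K] V) →ₗ[K] K :=
  (B.flip (M (Pi.single l 1))).comp (LinearMap.applyₗ (Pi.single k 1)) +
    (B (M (Pi.single k 1))).comp (LinearMap.applyₗ (Pi.single l 1))

variable {B : LinearMap.BilinForm K V} {M : (ι → K) →ₗ[K] V}

theorem isotropyDifferential_smulRight_proj (hB : B.IsAlt) (k l j : ι) (w : V) :
    isotropyDifferential B M k l ((LinearMap.proj j).smulRight w) =
      -B (M (skewSingle k l j)) w := by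
  simp only [isotropyDifferential, LinearMap.add_apply, coe_comp, Function.comp_apply,
    applyₗ_apply_apply, coe_smulRight, coe_proj, Function.eval, map_smul,
    BilinForm.flip_apply, smul_eq_mul, ← hB.neg_eq w, skewSingle_row, map_sub,
    LinearMap.sub_apply, LinearMap.smul_apply]
  ring

theorem skewOfUpper_row_mem_ker [Fintype ι] (hB : B.IsAlt) (hsep : B.SeparatingLeft)
    {c : {q : ι × ι // q.1 < q.2} → K}
    (hc : ∑ q, c q • isotropyDifferential B M q.1.1 q.1.2 = 0) (j : ι) :
    skewOfUpper c j ∈ ker M := by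
  refine hsep _ fun w => neg_eq_zero.mp ?_
  have h := LinearMap.congr_fun hc ((LinearMap.proj j).smulRight w)
  simpa [isotropyDifferential_smulRight_proj hB, skewOfUpper_row, map_sum] using h

end IsotropyDifferential

theorem stmt_3_general (n : ℕ)
    (B : LinearMap.BilinForm ℂ (Fin (2 * n) → ℂ))
    (halt : ∀ v, B v v = 0)
    (hnondeg : ∀ v, (∀ w, B v w = 0) → v = 0)
    (M : (Fin n → ℂ) →ₗ[ℂ] (Fin (2 * n) → ℂ))
    (hrank : n - 1 ≤ Module.finrank ℂ (LinearMap.range M))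
    (D : {q : Fin n × Fin n // q.1 < q.2} →
      ((Fin n → ℂ) →ₗ[ℂ] (Fin (2 * n) → ℂ)) →ₗ[ℂ] ℂ)
    (hD : ∀ q, D q =
      ((B.flip (M (Pi.single q.1.2 1))).comp
          (LinearMap.applyₗ (Pi.single q.1.1 1))) +
      ((B (M (Pi.single q.1.1 1))).comp
          (LinearMap.applyₗ (Pi.single q.1.2 1)))) :
    LinearIndependent ℂ D := by
  obtain rfl : D = fun q => isotropyDifferential B M q.1.1 q.1.2 := funext hD
  have hker : finrank ℂ (ker M) ≤ 1 := by
    have := M.finrank_range_add_finrank_ker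
    rw [finrank_fin_fun] at this
    omega
  refine Fintype.linearIndependent_iff.mpr fun c hc => congrFun ?_
  exact skewOfUpper_eq_zero_of_row_mem hker (skewOfUpper_row_mem_ker halt hnondeg hc)

theorem stmt_3 (n : ℕ)
    (B : LinearMap.BilinForm ℂ (Fin (2 * n) → ℂ))
    (halt : ∀ v, B v v = 0)
    (hnondeg : ∀ v, (∀ w, B v w = 0) → v = 0)
    (M : (Fin n → ℂ) →ₗ[ℂ] (Fin (2 * n) → ℂ))
    (hrank : n - 1 ≤ Module.finrank ℂ (LinearMap.range M))
    (hiso : ∀ x y : Fin n → ℂ, B (M x) (M y) = 0)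
    (D : {q : Fin n × Fin n // q.1 < q.2} →
      ((Fin n → ℂ) →ₗ[ℂ] (Fin (2 * n) → ℂ)) →ₗ[ℂ] ℂ)
    (hD : ∀ q, D q =
      ((B.flip (M (Pi.single q.1.2 1))).comp
          (LinearMap.applyₗ (Pi.single q.1.1 1))) +
      ((B (M (Pi.single q.1.1 1))).comp
          (LinearMap.applyₗ (Pi.single q.1.2 1)))) :
    LinearIndependent ℂ D :=
  stmt_3_general n B halt hnondeg M hrank D hD
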